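/- In the setting of the previous decomposition (y = dᵀQd − tr(ΣQ) + 2x̂ᵀQd a.s. with d independent of F = σ(h), E(d)=0, Σ = E(ddᵀ), γ = E(d dᵀ Q d), δ = var(dᵀQd), E|d|⁴ < ∞, x̂ F-measurable and square-integrable), the expectation of y² satisfies E(y²) = 4E(x̂ᵀQΣQx̂) + 4E(x̂ᵀQγ) + δ, provided x̂ᵀQΣQx̂ and x̂ᵀQγ are integrable. -/

import Mathlib

/-!
With `a = dᵀQd`, `t = tr(ΣQ)` and `z = Qx̂` (Q symmetric), `y = (a - t) + 2 zᵀd`, so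
`E y² = E(a - t)² + 4 E((a - t) zᵀd) + 4 E((zᵀd)²)`. Since `E a = t`, the first term is `δ`.
The cross term is `zᵀ((a - t) d)`, a pairing of two independent vectors, so it has mean
`E zᵀ E((a - t) d) = E zᵀ γ` because `E d = 0`. Finally `(zᵀd)²` is the entrywise pairing of the
independent matrices `zzᵀ` and `ddᵀ`, so its mean is `E(zᵀΣz) = E(x̂ᵀQΣQx̂)`.
-/

open MeasureTheory ProbabilityTheory Matrix

instance : ENNReal.HolderTriple 4 4 2 where
  inv_add_inv_eq_inv := by
    rw [← two_mul, show (4 : ENNReal) = 2 * 2 by norm_num, ENNReal.mul_inv (by simp) (by simp),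
      ← mul_assoc, ENNReal.mul_inv_cancel (by simp) (by simp), one_mul]

namespace Matrix

variable {ι R : Type*} [Fintype ι] [CommSemiring R]

theorem dotProduct_mulVec_self_eq_vec (u : ι → R) (M : Matrix ι ι R) :
    u ⬝ᵥ M *ᵥ u = vec (vecMulVec u u) ⬝ᵥ vec M := by
  simp only [dotProduct, mulVec, vec, vecMulVec_apply, Fintype.sum_prod_type, Finset.mul_sum]
  rw [Finset.sum_comm]
  exact Finset.sum_congr rfl fun _ _ => Finset.sum_congr rfl fun _ _ => by ring

theorem dotProduct_sq_eq_vec (u v : ι → R) :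
    (u ⬝ᵥ v) ^ 2 = vec (vecMulVec u u) ⬝ᵥ vec (vecMulVec v v) := by
  simp only [sq, dotProduct, vec, vecMulVec_apply, Fintype.sum_prod_type, Finset.sum_mul_sum]
  rw [Finset.sum_comm]
  exact Finset.sum_congr rfl fun _ _ => Finset.sum_congr rfl fun _ _ => by ring

theorem IsSymm.dotProduct_mulVec_comm {M : Matrix ι ι R} (hM : M.IsSymm) (u v : ι → R) :
    u ⬝ᵥ M *ᵥ v = M *ᵥ u ⬝ᵥ v := by
  rw [dotProduct_mulVec, ← mulVec_transpose, hM.eq]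

end Matrix

namespace MeasureTheory

variable {Ω ι κ : Type*} [Fintype ι] [Fintype κ] {m0 : MeasurableSpace Ω} {μ : Measure Ω}
  {p q r : ENNReal} {X : Ω → ι → ℝ}

theorem integral_dotProduct_const (hX : Integrable X μ) (v : ι → ℝ) :
    ∫ ω, X ω ⬝ᵥ v ∂μ = μ[X] ⬝ᵥ v := by
  simp only [dotProduct]
  rw [integral_finsetSum _ fun i _ => (hX.eval i).mul_const _]
  exact Finset.sum_congr rfl fun i _ => by rw [integral_mul_const, eval_integral hX.eval]

theorem MemLp.dotProduct_const (hX : MemLp X p μ) (v : ι → ℝ) :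
    MemLp (fun ω => X ω ⬝ᵥ v) p μ :=
  memLp_finsetSum _ fun i _ => (hX.eval i).mul_const _

theorem MemLp.mulVec (hX : MemLp X p μ) (M : Matrix κ ι ℝ) :
    MemLp (fun ω => M *ᵥ X ω) p μ :=
  (mulVecLin M).toContinuousLinearMap.comp_memLp' hX

theorem MemLp.vec_vecMulVec [ENNReal.HolderTriple p q r] {Y : Ω → κ → ℝ}
    (hX : MemLp X p μ) (hY : MemLp Y q μ) :
    MemLp (fun ω => vec (vecMulVec (X ω) (Y ω))) r μ :=
  memLp_pi_iff.2 fun k => by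
    simpa only [vec, vecMulVec_apply] using (hY.eval k.1).mul' (hX.eval k.2)

theorem MemLp.dotProduct_mulVec_self [ENNReal.HolderTriple p p r] (hX : MemLp X p μ)
    (M : Matrix ι ι ℝ) : MemLp (fun ω => X ω ⬝ᵥ M *ᵥ X ω) r μ := by
  simpa only [dotProduct_mulVec_self_eq_vec] using (hX.vec_vecMulVec hX).dotProduct_const (vec M)

theorem MemLp.dotProduct_mulVec_sub_smul [IsFiniteMeasure μ] (hX : MemLp X 4 μ)
    (M : Matrix ι ι ℝ) (c : ℝ) : MemLp (fun ω => (X ω ⬝ᵥ M *ᵥ X ω - c) • X ω) 1 μ :=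
  (hX.mono_exponent (by norm_num : (2 : ENNReal) ≤ 4)).smul
    ((hX.dotProduct_mulVec_self (r := 2) M).sub (memLp_const c))

theorem integral_add_two_mul_sq {a b : Ω → ℝ} (ha : Integrable (fun ω => a ω ^ 2) μ)
    (hab : Integrable (fun ω => a ω * b ω) μ) (hb : Integrable (fun ω => b ω ^ 2) μ) :
    ∫ ω, (a ω + 2 * b ω) ^ 2 ∂μ =
      ∫ ω, a ω ^ 2 ∂μ + 4 * ∫ ω, a ω * b ω ∂μ + 4 * ∫ ω, b ω ^ 2 ∂μ := by
  have hexpand (ω : Ω) : (a ω + 2 * b ω) ^ 2 = a ω ^ 2 + 4 * (a ω * b ω) + 4 * b ω ^ 2 := by ring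
  simp only [hexpand]
  rw [integral_add (ha.fun_add (hab.const_mul 4)) (hb.const_mul 4),
    integral_add ha (hab.const_mul 4), integral_const_mul, integral_const_mul]

end MeasureTheory

namespace ProbabilityTheory

variable {Ω : Type*} {m0 : MeasurableSpace Ω} {μ : Measure Ω}

theorem IndepFun.of_measurable_comap_right {β γ δ : Type*} [MeasurableSpace β]
    [mγ : MeasurableSpace γ] [MeasurableSpace δ] {X : Ω → β} {Y : Ω → γ} {Z : Ω → δ}
    (hXY : X ⟂ᵢ[μ] Y) (hZ : Measurable[mγ.comap Y] Z) : X ⟂ᵢ[μ] Z := by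
  rw [IndepFun_iff_Indep] at hXY ⊢
  exact indep_of_indep_of_le_right hXY (measurable_iff_comap_le.mp hZ)

theorem IndepFun.vec_vecMulVec_self {ι : Type*} {Z D : Ω → ι → ℝ} (hZD : Z ⟂ᵢ[μ] D) :
    (fun ω => vec (vecMulVec (Z ω) (Z ω))) ⟂ᵢ[μ] (fun ω => vec (vecMulVec (D ω) (D ω))) :=
  have hmeas : Measurable fun v : ι → ℝ => vec (vecMulVec v v) :=
    measurable_pi_lambda _ fun _ => (measurable_pi_apply _).mul (measurable_pi_apply _)
  hZD.comp hmeas hmeas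

variable {ι : Type*} [Fintype ι] {X Y D Z : Ω → ι → ℝ} {S : Matrix ι ι ℝ}

theorem IndepFun.integrable_dotProduct (hXY : X ⟂ᵢ[μ] Y) (hX : Integrable X μ)
    (hY : Integrable Y μ) : Integrable (fun ω => X ω ⬝ᵥ Y ω) μ :=
  integrable_finsetSum _ fun i _ =>
    (hXY.comp (measurable_pi_apply i) (measurable_pi_apply i)).integrable_mul
      (hX.eval i) (hY.eval i)

theorem IndepFun.integral_dotProduct (hXY : X ⟂ᵢ[μ] Y) (hX : Integrable X μ)
    (hY : Integrable Y μ) : ∫ ω, X ω ⬝ᵥ Y ω ∂μ = μ[X] ⬝ᵥ μ[Y] := by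
  have hXYi (i : ι) : (X · i) ⟂ᵢ[μ] (Y · i) :=
    hXY.comp (measurable_pi_apply i) (measurable_pi_apply i)
  simp only [dotProduct]
  rw [integral_finsetSum (f := fun i ω => X ω i * Y ω i) _ fun i _ =>
    (hXYi i).integrable_mul (hX.eval i) (hY.eval i)]
  refine Finset.sum_congr rfl fun i _ => ?_
  rw [eval_integral hX.eval, eval_integral hY.eval]
  exact (hXYi i).integral_mul_eq_mul_integral (hX.eval i).1 (hY.eval i).1

theorem integral_vec_vecMulVec_self (hD : MemLp D 2 μ)
    (hS : ∀ i j, S i j = ∫ ω, D ω i * D ω j ∂μ) :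
    ∫ ω, vec (vecMulVec (D ω) (D ω)) ∂μ = vec S := by
  ext ⟨j, i⟩
  rw [eval_integral (memLp_one_iff_integrable.1 (hD.vec_vecMulVec hD)).eval]
  exact (hS i j).symm

theorem integral_dotProduct_mulVec_self (hD : MemLp D 2 μ)
    (hS : ∀ i j, S i j = ∫ ω, D ω i * D ω j ∂μ) (M : Matrix ι ι ℝ) :
    ∫ ω, D ω ⬝ᵥ M *ᵥ D ω ∂μ = (S * M).trace := by
  have hSymm : Sᵀ = S := by
    ext i j
    simp only [transpose_apply, hS, mul_comm]
  simp only [dotProduct_mulVec_self_eq_vec]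
  rw [integral_dotProduct_const (memLp_one_iff_integrable.1 (hD.vec_vecMulVec hD)),
    integral_vec_vecMulVec_self hD hS, vec_dotProduct_vec, hSymm]

theorem integral_dotProduct_mulVec_sub_smul [IsFiniteMeasure μ] (hD : MemLp D 4 μ)
    (hmean : ∀ i, ∫ ω, D ω i ∂μ = 0) (M : Matrix ι ι ℝ) (c : ℝ) :
    ∫ ω, (D ω ⬝ᵥ M *ᵥ D ω - c) • D ω ∂μ = fun i => ∫ ω, D ω i * (D ω ⬝ᵥ M *ᵥ D ω) ∂μ := by
  have hD2 : MemLp D 2 μ := hD.mono_exponent (by norm_num)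
  ext i
  rw [eval_integral (memLp_one_iff_integrable.1 (hD.dotProduct_mulVec_sub_smul M c)).eval]
  simp only [Pi.smul_apply, smul_eq_mul, sub_mul]
  rw [integral_sub _ (((hD2.eval i).integrable one_le_two).const_mul c), integral_const_mul, hmean,
    mul_zero, sub_zero]
  · simp only [mul_comm]
  · exact memLp_one_iff_integrable.1 ((hD2.eval i).mul' (hD.dotProduct_mulVec_self (r := 2) M))

theorem IndepFun.dotProduct_mulVec_sub_smul (hZD : Z ⟂ᵢ[μ] D) (M : Matrix ι ι ℝ) (c : ℝ) :
    Z ⟂ᵢ[μ] fun ω => (D ω ⬝ᵥ M *ᵥ D ω - c) • D ω :=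
  hZD.comp (φ := id) (ψ := fun v => (v ⬝ᵥ M *ᵥ v - c) • v) measurable_id (by fun_prop)

theorem IndepFun.integrable_dotProduct_mulVec_sub_mul_dotProduct [IsFiniteMeasure μ]
    (hZD : Z ⟂ᵢ[μ] D) (hZ : Integrable Z μ) (hD : MemLp D 4 μ) (M : Matrix ι ι ℝ) (c : ℝ) :
    Integrable (fun ω => (D ω ⬝ᵥ M *ᵥ D ω - c) * (Z ω ⬝ᵥ D ω)) μ := by
  simp only [← smul_eq_mul (a := (_ : ℝ) - c), ← dotProduct_smul]
  exact (hZD.dotProduct_mulVec_sub_smul M c).integrable_dotProduct hZ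
    (memLp_one_iff_integrable.1 (hD.dotProduct_mulVec_sub_smul M c))

theorem IndepFun.integral_dotProduct_mulVec_sub_mul_dotProduct [IsFiniteMeasure μ]
    (hZD : Z ⟂ᵢ[μ] D) (hZ : Integrable Z μ) (hD : MemLp D 4 μ)
    (hmean : ∀ i, ∫ ω, D ω i ∂μ = 0) (M : Matrix ι ι ℝ) (c : ℝ) :
    ∫ ω, (D ω ⬝ᵥ M *ᵥ D ω - c) * (Z ω ⬝ᵥ D ω) ∂μ =
      μ[Z] ⬝ᵥ fun i => ∫ ω, D ω i * (D ω ⬝ᵥ M *ᵥ D ω) ∂μ := by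
  simp only [← smul_eq_mul (a := (_ : ℝ) - c), ← dotProduct_smul]
  rw [(hZD.dotProduct_mulVec_sub_smul M c).integral_dotProduct hZ
    (memLp_one_iff_integrable.1 (hD.dotProduct_mulVec_sub_smul M c)),
    integral_dotProduct_mulVec_sub_smul hD hmean M c]

theorem IndepFun.integrable_dotProduct_sq (hZD : Z ⟂ᵢ[μ] D) (hZ : MemLp Z 2 μ)
    (hD : MemLp D 2 μ) : Integrable (fun ω => (Z ω ⬝ᵥ D ω) ^ 2) μ := by
  simp only [dotProduct_sq_eq_vec]
  exact hZD.vec_vecMulVec_self.integrable_dotProduct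
    (memLp_one_iff_integrable.1 (hZ.vec_vecMulVec hZ))
    (memLp_one_iff_integrable.1 (hD.vec_vecMulVec hD))

theorem IndepFun.integral_dotProduct_sq (hZD : Z ⟂ᵢ[μ] D) (hZ : MemLp Z 2 μ)
    (hD : MemLp D 2 μ) (hS : ∀ i j, S i j = ∫ ω, D ω i * D ω j ∂μ) :
    ∫ ω, (Z ω ⬝ᵥ D ω) ^ 2 ∂μ = ∫ ω, Z ω ⬝ᵥ S *ᵥ Z ω ∂μ := by
  have hZZ := memLp_one_iff_integrable.1 (hZ.vec_vecMulVec hZ)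
  simp only [dotProduct_sq_eq_vec, dotProduct_mulVec_self_eq_vec]
  rw [hZD.vec_vecMulVec_self.integral_dotProduct hZZ
    (memLp_one_iff_integrable.1 (hD.vec_vecMulVec hD)), integral_vec_vecMulVec_self hD hS,
    integral_dotProduct_const hZZ]

end ProbabilityTheory

theorem stmt8_general {Ω : Type*} {m0 : MeasurableSpace Ω} (μ : Measure Ω) [IsProbabilityMeasure μ]
    {p n : ℕ} (h : Ω → Fin p → ℝ)
    (xhat d : Ω → Fin n → ℝ)
    (hxhat : Measurable[MeasurableSpace.comap h inferInstance] xhat)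
    (hxhat2 : MemLp xhat 2 μ)
    (hindep : IndepFun d h μ)
    (hdmean : ∀ i, ∫ ω, d ω i ∂μ = 0)
    (hd4 : MemLp d 4 μ)
    (Q : Matrix (Fin n) (Fin n) ℝ) (hQ : Q.IsSymm)
    (S : Matrix (Fin n) (Fin n) ℝ) (hS : ∀ i j, S i j = ∫ ω, d ω i * d ω j ∂μ)
    (γ : Fin n → ℝ) (hγ : ∀ i, γ i = ∫ ω, d ω i * (d ω ⬝ᵥ Q.mulVec (d ω)) ∂μ)
    (δ : ℝ)
    (hδ : δ = (∫ ω, (d ω ⬝ᵥ Q.mulVec (d ω)) ^ 2 ∂μ) - (∫ ω, d ω ⬝ᵥ Q.mulVec (d ω) ∂μ) ^ 2)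
    (y : Ω → ℝ)
    (hy : y = fun ω =>
      d ω ⬝ᵥ Q.mulVec (d ω) - (S * Q).trace + 2 * (xhat ω ⬝ᵥ Q.mulVec (d ω))) :
    ∫ ω, (y ω) ^ 2 ∂μ =
      4 * (∫ ω, xhat ω ⬝ᵥ (Q * S * Q).mulVec (xhat ω) ∂μ) +
        4 * (∫ ω, xhat ω ⬝ᵥ Q.mulVec γ ∂μ) + δ := by
  set A := fun ω => d ω ⬝ᵥ Q *ᵥ d ω
  set t := (S * Q).trace
  set z := fun ω => Q *ᵥ xhat ω
  have hd2 : MemLp d 2 μ := hd4.mono_exponent (by norm_num)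
  have hA : MemLp A 2 μ := hd4.dotProduct_mulVec_self Q
  have hz : MemLp z 2 μ := hxhat2.mulVec Q
  have hzd : z ⟂ᵢ[μ] d :=
    (hindep.of_measurable_comap_right hxhat).symm.comp (φ := (Q *ᵥ ·)) (by fun_prop) measurable_id
  have hvar : ∫ ω, (A ω - t) ^ 2 ∂μ = δ := by
    have hEA : μ[A] = t := integral_dotProduct_mulVec_self hd2 hS Q
    rw [← hEA, ← variance_eq_integral hA.aemeasurable, variance_eq_sub hA, hδ]
    rfl
  have hcross : ∫ ω, (A ω - t) * (z ω ⬝ᵥ d ω) ∂μ = ∫ ω, xhat ω ⬝ᵥ Q *ᵥ γ ∂μ := by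
    rw [hzd.integral_dotProduct_mulVec_sub_mul_dotProduct (hz.integrable one_le_two) hd4 hdmean,
      ← funext hγ, ← integral_dotProduct_const (hz.integrable one_le_two)]
    simp only [z, hQ.dotProduct_mulVec_comm]
  have hsq : ∫ ω, (z ω ⬝ᵥ d ω) ^ 2 ∂μ = ∫ ω, xhat ω ⬝ᵥ (Q * S * Q) *ᵥ xhat ω ∂μ := by
    rw [hzd.integral_dotProduct_sq hz hd2 hS]
    simp only [z, ← hQ.dotProduct_mulVec_comm, mulVec_mulVec, Matrix.mul_assoc]
  have hy' : y = fun ω => (A ω - t) + 2 * (z ω ⬝ᵥ d ω) := by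
    rw [hy]
    ext ω
    rw [hQ.dotProduct_mulVec_comm (xhat ω)]
  rw [hy', integral_add_two_mul_sq (a := fun ω => A ω - t) (hA.sub (memLp_const t)).integrable_sq
    (hzd.integrable_dotProduct_mulVec_sub_mul_dotProduct (hz.integrable one_le_two) hd4 Q t)
    (hzd.integrable_dotProduct_sq hz hd2), hvar, hcross, hsq]
  ring

theorem stmt8 {Ω : Type*} {m0 : MeasurableSpace Ω} (μ : Measure Ω) [IsProbabilityMeasure μ]
    {p n : ℕ} (h : Ω → Fin p → ℝ) (hh : Measurable h)
    (xhat d : Ω → Fin n → ℝ)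
    (hxhat : Measurable[MeasurableSpace.comap h inferInstance] xhat)
    (hxhat2 : MemLp xhat 2 μ)
    (hd : Measurable d) (hindep : IndepFun d h μ)
    (hdmean : ∀ i, ∫ ω, d ω i ∂μ = 0)
    (hd4 : MemLp d 4 μ)
    (Q : Matrix (Fin n) (Fin n) ℝ) (hQ : Q.IsSymm)
    (S : Matrix (Fin n) (Fin n) ℝ) (hS : ∀ i j, S i j = ∫ ω, d ω i * d ω j ∂μ)
    (γ : Fin n → ℝ) (hγ : ∀ i, γ i = ∫ ω, d ω i * (d ω ⬝ᵥ Q.mulVec (d ω)) ∂μ)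
    (δ : ℝ)
    (hδ : δ = (∫ ω, (d ω ⬝ᵥ Q.mulVec (d ω)) ^ 2 ∂μ) - (∫ ω, d ω ⬝ᵥ Q.mulVec (d ω) ∂μ) ^ 2)
    (y : Ω → ℝ)
    (hy : y = fun ω =>
      d ω ⬝ᵥ Q.mulVec (d ω) - (S * Q).trace + 2 * (xhat ω ⬝ᵥ Q.mulVec (d ω)))
    (hint1 : Integrable (fun ω => xhat ω ⬝ᵥ (Q * S * Q).mulVec (xhat ω)) μ)
    (hint2 : Integrable (fun ω => xhat ω ⬝ᵥ Q.mulVec γ) μ) :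
    ∫ ω, (y ω) ^ 2 ∂μ =
      4 * (∫ ω, xhat ω ⬝ᵥ (Q * S * Q).mulVec (xhat ω) ∂μ) +
        4 * (∫ ω, xhat ω ⬝ᵥ Q.mulVec γ ∂μ) + δ :=
  stmt8_general (m0 := m0) μ h xhat d hxhat hxhat2 hindep hdmean hd4 Q hQ S hS γ hγ δ hδ y hy
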